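/- If f ∈ H^2(𝔻) satisfies f ∈ zφ^δH^2(𝔻) and S*f ∈ zφ^δH^2(𝔻) (where S* is the backward shift), then f ∈ z²φ^δH^2(𝔻). -/
import Mathlib


open Complex MeasureTheory Metric Set

/-- Taylor coefficient at 0. -/
noncomputable def hcoeff (f : ℂ → ℂ) (n : ℕ) : ℂ := iteratedDeriv n f 0 / n.factorial

/-- H² inner product via Taylor coefficients (conjugate-linear in first slot). -/
noncomputable def hinner (f g : ℂ → ℂ) : ℂ :=
  ∑' n : ℕ, (starRingEnd ℂ) (hcoeff f n) * hcoeff g n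

/-- H² squared norm via Taylor coefficients. -/
noncomputable def hnormSq (f : ℂ → ℂ) : ℝ := ∑' n : ℕ, ‖hcoeff f n‖ ^ 2

/-- Membership in the Hardy space H²(𝔻). -/
def MemH2 (f : ℂ → ℂ) : Prop :=
  DifferentiableOn ℂ f (ball 0 1) ∧ Summable fun n : ℕ => ‖hcoeff f n‖ ^ 2

/-- Inner function on the unit disc. -/
def IsInner (u : ℂ → ℂ) : Prop :=
  DifferentiableOn ℂ u (ball 0 1) ∧ (∀ z ∈ ball (0 : ℂ) 1, ‖u z‖ ≤ 1) ∧
    ∀ᵐ t : ℝ, Filter.Tendsto (fun r : ℝ => ‖u ((r : ℂ) * Complex.exp (Complex.I * t))‖)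
      (nhdsWithin 1 (Set.Iio 1)) (nhds 1)

/-- Membership in the model space K_u = H² ⊖ uH². -/
def MemK (u f : ℂ → ℂ) : Prop :=
  MemH2 f ∧ ∀ g, MemH2 g → hinner (fun z => u z * g z) f = 0

/-- The powers of the atomic singular inner function. -/
noncomputable def phi (lam : ℝ) (z : ℂ) : ℂ := Complex.exp (-(lam : ℂ) * (1 - z) / (1 + z))

/-- Membership in the closed linear span of a family {F λ : λ ∈ A} in H². -/
def InClosedSpan (F : ℝ → ℂ → ℂ) (A : Set ℝ) (f : ℂ → ℂ) : Prop :=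
  MemH2 f ∧ ∀ ε > 0, ∃ (n : ℕ) (c : Fin n → ℂ) (lam : Fin n → ℝ),
    (∀ i, lam i ∈ A) ∧ hnormSq (fun z => f z - ∑ i, c i * F (lam i) z) < ε

/-- If f ∈ zφ^δH²(𝔻) and S*f ∈ zφ^δH²(𝔻), then f ∈ z²φ^δH²(𝔻). -/
theorem stmt11 (δ : ℝ) (hδ : 0 < δ) (f : ℂ → ℂ) (hf : MemH2 f)
    (h1 : ∃ h, MemH2 h ∧ ∀ z ∈ ball (0 : ℂ) 1, f z = z * phi δ z * h z)
    (h2 : ∃ h, MemH2 h ∧ ∀ z ∈ ball (0 : ℂ) 1, z ≠ 0 → (f z - f 0) / z = z * phi δ z * h z) :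
    ∃ h, MemH2 h ∧ ∀ z ∈ ball (0 : ℂ) 1, f z = z ^ 2 * phi δ z * h z := by
  obtain ⟨h₁, hh₁, e1⟩ := h1
  obtain ⟨h₂, hh₂, e2⟩ := h2
  have hf0 : f 0 = 0 := by simpa using e1 0 (by simp)
  refine ⟨h₂, hh₂, fun z hz => ?_⟩
  by_cases hz0 : z = 0
  · simp [hz0, hf0]
  · have h := e2 z hz hz0
    rw [hf0, sub_zero] at h
    have : f z = z * (z * phi δ z * h₂ z) := by rw [← h]; field_simp
    rw [this]; ring
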